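/- Define, for ρ ∈ [-1,1] with q = √(1-ρ²): K₁(ρ) = (q + ρ·arccos(-ρ))/(2π), K₂(ρ) = (3ρq + arccos(-ρ)(1+2ρ²))/(2π), K₃₁(ρ) = (q(2+ρ²) + 3ρ·arccos(-ρ))/(2π), and μ_r(ρ) = (1/2)·[ K₁(ρ)·(4K₂(ρ) + 18) − 8·K₃₁(ρ) ]. Then lim_{ρ → 1⁻} ( μ_r(ρ) + 2(1-ρ) ) / (1-ρ)^{3/2} = 4√2 / π. -/

import Mathlib

/-!
Substitute `ρ = cos b` with `b = arccos ρ → 0⁺`, so that `√(1-ρ²) = sin b` and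
`arccos (-ρ) = π - b`. Writing `1 - cos b = U b²` and `sin b = b + W b³`, the numerator
`μ_r(ρ) + 2(1-ρ)` is exactly `b³` times a polynomial in `b, U, W` whose value at
`b = 0, U = 1/2, W = -1/6` is `2/π`, while `(1-ρ)^{3/2} = b³ U^{3/2}`. Hence the quotient
tends to `(2/π) / (1/2)^{3/2} = 4√2/π`.
-/

open Real Filter

/-- Cho–Saul ReLU kernel `K₁(ρ) = (q + ρ arccos(-ρ))/(2π)`, `q = √(1-ρ²)`. -/
noncomputable def K1 (ρ : ℝ) : ℝ :=
  (Real.sqrt (1 - ρ ^ 2) + ρ * Real.arccos (-ρ)) / (2 * π)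

/-- Cho–Saul ReLU kernel `K₂(ρ) = (3ρq + arccos(-ρ)(1+2ρ²))/(2π)`. -/
noncomputable def K2 (ρ : ℝ) : ℝ :=
  (3 * ρ * Real.sqrt (1 - ρ ^ 2) + Real.arccos (-ρ) * (1 + 2 * ρ ^ 2)) / (2 * π)

/-- Mixed Cho–Saul ReLU kernel `K₃₁(ρ) = (q(2+ρ²) + 3ρ arccos(-ρ))/(2π)`. -/
noncomputable def K31 (ρ : ℝ) : ℝ :=
  (Real.sqrt (1 - ρ ^ 2) * (2 + ρ ^ 2) + 3 * ρ * Real.arccos (-ρ)) / (2 * π)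

/-- Expected drift `μ_r(ρ) = (1/2)[K₁(4K₂ + 18) − 8K₃₁]` of the correlation
Markov chain of a He-initialized unshaped ReLU MLP. -/
noncomputable def mur (ρ : ℝ) : ℝ :=
  (1 / 2) * (K1 ρ * (4 * K2 ρ + 18) - 8 * K31 ρ)

open Set Topology

lemma tendsto_nhdsNE_zero_of_abs_sub_le {f : ℝ → ℝ} {L C : ℝ}
    (h : ∀ᶠ x in 𝓝[≠] 0, |f x - L| ≤ C * |x|) : Tendsto f (𝓝[≠] 0) (𝓝 L) := by
  have hcont : Continuous fun x : ℝ => C * |x| := by fun_prop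
  have hC : Tendsto (fun x : ℝ => C * |x|) (𝓝[≠] 0) (𝓝 0) := by
    simpa using (hcont.tendsto 0).mono_left nhdsWithin_le_nhds
  exact tendsto_iff_norm_sub_tendsto_zero.mpr
    (squeeze_zero' (.of_forall fun _ => norm_nonneg _) h hC)

lemma tendsto_one_sub_cos_div_sq :
    Tendsto (fun x => (1 - cos x) / x ^ 2) (𝓝[≠] 0) (𝓝 (1 / 2)) := by
  refine tendsto_nhdsNE_zero_of_abs_sub_le (C := 5 / 96) ?_
  filter_upwards [self_mem_nhdsWithin,
    nhdsWithin_le_nhds (Icc_mem_nhds (by norm_num : (-1 : ℝ) < 0) one_pos)]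
    with x (hx0 : x ≠ 0) hx1
  have hx : |x| ≤ 1 := abs_le.mpr hx1
  have hbound := cos_bound hx
  have hsq : 0 < x ^ 2 := by positivity
  rw [show (1 - cos x) / x ^ 2 - 1 / 2 = -(cos x - (1 - x ^ 2 / 2)) / x ^ 2 by field_simp; ring,
    abs_div, abs_neg, abs_of_pos hsq, div_le_iff₀ hsq]
  have hcube : |x| * x ^ 2 = |x| ^ 3 := by rw [← sq_abs x]; ring
  linarith [pow_le_pow_of_le_one (abs_nonneg x) hx (by norm_num : 3 ≤ 4)]

lemma tendsto_sin_sub_self_div_cube :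
    Tendsto (fun x => (sin x - x) / x ^ 3) (𝓝[≠] 0) (𝓝 (-(1 / 6))) := by
  refine tendsto_nhdsNE_zero_of_abs_sub_le (C := 1 / 100) ?_
  filter_upwards [self_mem_nhdsWithin,
    nhdsWithin_le_nhds (Icc_mem_nhds (by norm_num : (-1 : ℝ) < 0) one_pos)]
    with x (hx0 : x ≠ 0) hx1
  have hx : |x| ≤ 1 := abs_le.mpr hx1
  have hbound := sin_bound hx
  have hcube : 0 < |x| ^ 3 := by positivity
  rw [show (sin x - x) / x ^ 3 - -(1 / 6) = (sin x - (x - x ^ 3 / 6)) / x ^ 3 by field_simp; ring,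
    abs_div, abs_pow, div_le_iff₀ hcube]
  linarith [pow_le_pow_of_le_one (abs_nonneg x) hx (by norm_num : 4 ≤ 5)]

lemma tendsto_arccos_nhdsLT_one : Tendsto arccos (𝓝[<] 1) (𝓝[>] 0) := by
  refine tendsto_nhdsWithin_iff.mpr ⟨?_, ?_⟩
  · simpa using (continuous_arccos.tendsto 1).mono_left nhdsWithin_le_nhds
  · filter_upwards [self_mem_nhdsWithin] with ρ (hρ : ρ < 1)
    exact arccos_pos.mpr hρ

noncomputable def driftCoeff (b U W : ℝ) : ℝ :=
  U ^ 2 * b * (3 - U * b ^ 2)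
    + (18 * U + 6 * W - b ^ 2 * (22 * U ^ 2 + 4 * U * W) + b ^ 4 * (8 * U ^ 3 + 2 * U ^ 2 * W))
      / (4 * π)
    + b ^ 3 * (2 * (1 - 2 * U * b ^ 2) * U ^ 2 + 2 * (4 - 5 * U * b ^ 2) * U * W
      + 6 * (1 - U * b ^ 2) * W ^ 2) / (4 * π ^ 2)

lemma continuous_driftCoeff :
    Continuous fun p : ℝ × ℝ × ℝ => driftCoeff p.1 p.2.1 p.2.2 := by
  unfold driftCoeff
  fun_prop

lemma driftCoeff_zero : driftCoeff 0 (1 / 2) (-(1 / 6)) = 2 / π := by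
  simp only [driftCoeff]
  field_simp
  ring

lemma mur_cos_add_eq_cube_mul_driftCoeff {b : ℝ} (hb0 : 0 < b) (hbπ : b ≤ π) :
    mur (cos b) + 2 * (1 - cos b) =
      b ^ 3 * driftCoeff b ((1 - cos b) / b ^ 2) ((sin b - b) / b ^ 3) := by
  have hq : √(1 - cos b ^ 2) = sin b := (sin_eq_sqrt_one_sub_cos_sq hb0.le hbπ).symm
  have ha : arccos (-cos b) = π - b := by rw [arccos_neg, arccos_cos hb0.le hbπ]
  simp only [mur, K1, K2, K31, driftCoeff, hq, ha]
  field_simp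
  ring

lemma rpow_three_halves_eq_mul {x b : ℝ} (hx : 0 ≤ x) (hb : 0 < b) :
    x ^ ((3 : ℝ) / 2) = b ^ 3 * (x / b ^ 2) ^ ((3 : ℝ) / 2) := by
  rw [div_rpow hx (by positivity), ← rpow_natCast b 2, ← rpow_mul hb.le]
  norm_num
  field_simp

lemma half_rpow_three_halves : (1 / 2 : ℝ) ^ ((3 : ℝ) / 2) = √2 / 4 := by
  rw [rpow_div_two_eq_sqrt _ (by norm_num), show (3 : ℝ) = (3 : ℕ) by norm_num, rpow_natCast,
    sqrt_div' _ (by norm_num), sqrt_one]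
  have h2 : √2 ^ 2 = 2 := sq_sqrt (by norm_num)
  field_simp
  linear_combination -(√2 ^ 2 + 2) * h2

lemma tendsto_mur_cos :
    Tendsto (fun b => (mur (cos b) + 2 * (1 - cos b)) / (1 - cos b) ^ ((3 : ℝ) / 2))
      (𝓝[>] 0) (𝓝 (4 * √2 / π)) := by
  have hb : Tendsto (fun b : ℝ => b) (𝓝[>] 0) (𝓝 0) :=
    tendsto_id.mono_left nhdsWithin_le_nhds
  have hU := tendsto_one_sub_cos_div_sq.mono_left (nhdsGT_le_nhdsNE 0)
  have hW := tendsto_sin_sub_self_div_cube.mono_left (nhdsGT_le_nhdsNE 0)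
  have hD := (continuous_driftCoeff.tendsto _).comp (hb.prodMk_nhds (hU.prodMk_nhds hW))
  have hlim := hD.div (hU.rpow_const (p := (3 : ℝ) / 2) (.inl (by norm_num)))
    (by rw [half_rpow_three_halves]; positivity)
  rw [Function.comp_def, driftCoeff_zero, half_rpow_three_halves] at hlim
  rw [show 4 * √2 / π = 2 / π / (√2 / 4) by
    have h2 : √2 ^ 2 = 2 := sq_sqrt (by norm_num)
    field_simp
    linarith]
  refine hlim.congr' ?_
  filter_upwards [Ioo_mem_nhdsGT pi_pos] with b ⟨hb0, hbπ⟩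
  rw [Pi.div_apply, mur_cos_add_eq_cube_mul_driftCoeff hb0 hbπ.le,
    rpow_three_halves_eq_mul (sub_nonneg.mpr (cos_le_one b)) hb0,
    mul_div_mul_left _ _ (by positivity)]

/-- `(μ_r(ρ) + 2(1-ρ))/(1-ρ)^{3/2} → 4√2/π` as `ρ → 1⁻`. -/
theorem mur_expansion_second_order :
    Tendsto (fun ρ : ℝ => (mur ρ + 2 * (1 - ρ)) / (1 - ρ) ^ ((3 : ℝ) / 2))
      (nhdsWithin 1 (Set.Iio 1))
      (nhds (4 * Real.sqrt 2 / π)) := by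
  refine (tendsto_mur_cos.comp tendsto_arccos_nhdsLT_one).congr' ?_
  filter_upwards [Ioo_mem_nhdsLT (by norm_num : (-1 : ℝ) < 1)] with ρ ⟨hρ₁, hρ₂⟩
  rw [Function.comp_apply, cos_arccos hρ₁.le hρ₂.le]
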